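/- arXiv:1805.00294 — 8 statements merged into one kernel-verified Lean document; each statement's English description precedes it below -/
import Mathlib

section
/- Let 1 ≤ k < n+1 be integers and let d be an integer with 1 ≤ d ≤ k+1 such that d divides k+1 and d(n+2)/(k+1) is an integer. Then the number of d-additive sequences in X_n^k equals the binomial coefficient C(d(n+2)/(k+1) - 1, d - 1). -/
/-- `α` represents an element of `X_n^k`: a weakly increasing sequence
`{0,…,k} → {0,…,n+1-k}` (normalized to vanish beyond `k`). -/
def IsXseq (n k : ℕ) (α : ℕ → ℕ) : Prop :=
  (∀ i j : ℕ, i ≤ j → j ≤ k → α i ≤ α j) ∧ α k ≤ n + 1 - k ∧ ∀ i : ℕ, k < i → α i = 0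

/-- `d` is a divisor of `(k,n)`: `1 ≤ d ≤ k+1`, `d ∣ k+1` and `d(n+2)/(k+1) ∈ ℤ`. -/
def IsDivOf (n k d : ℕ) : Prop :=
  1 ≤ d ∧ d ≤ k + 1 ∧ d ∣ (k + 1) ∧ (k + 1) ∣ d * (n + 2)

/-- `α` is a `d`-additive sequence: for `d < k+1`, `α d = d·δ/(k+1)` (with `δ = n+1-k`)
and `α (j + i·d) = α j + i·α d` whenever `j + i·d ≤ k`; for `d = k+1`, just `α 0 = 0`. -/
def IsDAdd (n k d : ℕ) (α : ℕ → ℕ) : Prop :=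
  if d = k + 1 then α 0 = 0
  else (k + 1) * α d = d * (n + 1 - k) ∧
    ∀ i j : ℕ, j + i * d ≤ k → α (j + i * d) = α j + i * α d

/-!
Write `k + 1 = d (m + 1)` and `c = dδ/(k+1)`, so that `δ = (m + 1) c` and
`d(n+2)/(k+1) = c + d`. A `d`-additive sequence satisfies `α (j + i d) = α j + i c`, hence it is
determined by its values at `1, …, d-1`. These form a weakly increasing tuple in `[0, c]`: comparing
`α t + m c = α (t + m d) ≤ α k ≤ δ` bounds them by `c`, and conversely every such tuple extends
periodically to a `d`-additive element of `X_n^k`. By stars and bars (`β j ↦ β j + j`) there are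
`C(c + d - 1, d - 1)` such tuples.
-/

lemma StrictMono.apply_add_sub_le {r : ℕ} {f : Fin r → ℕ} (hf : StrictMono f) {i j : Fin r}
    (hij : i ≤ j) : f i + (j - i : ℕ) ≤ f j := by
  have hcard := Finset.card_le_card_of_injOn f (s := Finset.Icc i j) (t := Finset.Icc (f i) (f j))
    (fun x hx => by
      obtain ⟨hix, hxj⟩ := Finset.mem_Icc.mp hx
      exact Finset.mem_Icc.mpr ⟨hf.monotone hix, hf.monotone hxj⟩)
    hf.injective.injOn
  rw [Fin.card_Icc, Nat.card_Icc] at hcard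
  have : (i : ℕ) ≤ j := hij
  omega

lemma Fin.orderEmbedding_apply_mem_Icc {r c : ℕ} (f : Fin r ↪o Fin (c + r)) (j : Fin r) :
    (f j : ℕ) ∈ Set.Icc (j : ℕ) (c + j) := by
  have hf : StrictMono fun j => (f j : ℕ) := Fin.val_strictMono.comp f.strictMono
  have hr : r - 1 < r := Nat.sub_one_lt_of_lt j.isLt
  have hlow := hf.apply_add_sub_le (show (⟨0, j.pos⟩ : Fin r) ≤ j from Nat.zero_le _)
  have hhigh := hf.apply_add_sub_le (show j ≤ ⟨r - 1, hr⟩ from Nat.le_sub_one_of_lt j.isLt)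
  have hlast := (f ⟨r - 1, hr⟩).isLt
  simp only [Set.mem_Icc] at *
  omega

def monotoneBoundedEquivOrderEmbedding (r c : ℕ) :
    {β : Fin r → ℕ // Monotone β ∧ ∀ j, β j ≤ c} ≃ (Fin r ↪o Fin (c + r)) where
  toFun β := OrderEmbedding.ofStrictMono (fun j => ⟨β.1 j + j, by have := β.2.2 j; omega⟩)
    fun i j hij => by
      have := β.2.1 hij.le
      simp only [Fin.mk_lt_mk]
      omega
  invFun f :=
    ⟨fun j => f j - j,
      fun i j hij => by
        have := (Fin.val_strictMono.comp f.strictMono).apply_add_sub_le hij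
        have : (i : ℕ) ≤ j := hij
        simp only [Function.comp_apply] at *
        omega,
      fun j => by
        have := Fin.orderEmbedding_apply_mem_Icc f j
        simp only [Set.mem_Icc] at this
        show (f j : ℕ) - j ≤ c
        omega⟩
  left_inv β := Subtype.ext <| funext fun j => Nat.add_sub_cancel (β.1 j) j
  right_inv f := by
    ext j
    exact Nat.sub_add_cancel (Fin.orderEmbedding_apply_mem_Icc f j).1

theorem card_monotone_bounded (r c : ℕ) :
    Nat.card {β : Fin r → ℕ // Monotone β ∧ ∀ j, β j ≤ c} = (c + r).choose r := by
  rw [Nat.card_congr ((monotoneBoundedEquivOrderEmbedding r c).trans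
    Set.powersetCard.ofFinEmbEquiv), Set.powersetCard.card, Nat.card_eq_fintype_card,
    Fintype.card_fin]

def initialBlock (d : ℕ) (β : Fin (d - 1) → ℕ) (t : ℕ) : ℕ :=
  if h : t ≠ 0 ∧ t - 1 < d - 1 then β ⟨t - 1, h.2⟩ else 0

def blockSeq (k d c : ℕ) (β : Fin (d - 1) → ℕ) (i : ℕ) : ℕ :=
  if i ≤ k then initialBlock d β (i % d) + i / d * c else 0

section initialBlock

variable {d c : ℕ} {β : Fin (d - 1) → ℕ}

@[simp]
lemma initialBlock_zero : initialBlock d β 0 = 0 := dif_neg (by simp)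

lemma initialBlock_add_one (j : Fin (d - 1)) : initialBlock d β (j + 1) = β j :=
  dif_pos ⟨by omega, by simp⟩

lemma initialBlock_le (hβ : ∀ j, β j ≤ c) (t : ℕ) : initialBlock d β t ≤ c := by
  unfold initialBlock
  split
  · exact hβ _
  · exact Nat.zero_le c

lemma initialBlock_mono (hβ : Monotone β) {s t : ℕ} (hst : s ≤ t) (ht : t < d) :
    initialBlock d β s ≤ initialBlock d β t := by
  rcases Nat.eq_zero_or_pos s with rfl | hs
  · simp
  · rw [initialBlock, initialBlock, dif_pos ⟨by omega, by omega⟩, dif_pos ⟨by omega, by omega⟩]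
    exact hβ (Fin.mk_le_mk.mpr (by omega))

lemma initialBlock_apply_add_one {α : ℕ → ℕ} (h0 : α 0 = 0) {t : ℕ} (ht : t < d) :
    initialBlock d (fun j : Fin (d - 1) => α (j + 1)) t = α t := by
  rcases Nat.eq_zero_or_pos t with rfl | htpos
  · rw [initialBlock_zero, h0]
  · rw [initialBlock, dif_pos ⟨by omega, by omega⟩, Nat.sub_add_cancel htpos]

end initialBlock

section DAdditive

variable {n k d c : ℕ} {α : ℕ → ℕ}

lemma IsDAdd.apply_zero (hα : IsDAdd n k d α) (hd : d ≤ k + 1) : α 0 = 0 := by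
  unfold IsDAdd at hα
  split_ifs at hα with h
  · exact hα
  · simpa using hα.2 1 0 (by omega)

lemma IsDAdd.apply_add_mul (hα : IsDAdd n k d α) (hc : (k + 1) * c = d * (n + 1 - k)) {i j : ℕ}
    (hij : j + i * d ≤ k) : α (j + i * d) = α j + i * c := by
  unfold IsDAdd at hα
  split_ifs at hα with h
  · obtain rfl : i = 0 := by
      by_contra hi
      have := Nat.le_mul_of_pos_left d (Nat.pos_of_ne_zero hi)
      omega
    simp
  · obtain ⟨hαd, hadd⟩ := hα
    rw [hadd i j hij, Nat.eq_of_mul_eq_mul_left (Nat.succ_pos k) (hαd.trans hc.symm)]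

lemma IsDAdd.apply_eq_apply_mod (hα : IsDAdd n k d α) (hc : (k + 1) * c = d * (n + 1 - k))
    {i : ℕ} (hi : i ≤ k) : α i = α (i % d) + i / d * c := by
  conv_lhs => rw [← Nat.mod_add_div' i d]
  exact hα.apply_add_mul hc (by rwa [Nat.mod_add_div'])

end DAdditive

section blockSeq

variable {n k d m c : ℕ} {β : Fin (d - 1) → ℕ}

lemma blockSeq_add_one (hd : d ≤ k + 1) (j : Fin (d - 1)) : blockSeq k d c β (j + 1) = β j := by
  have hj := j.isLt
  rw [blockSeq, if_pos (by omega), Nat.mod_eq_of_lt (by omega), Nat.div_eq_of_lt (by omega),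
    initialBlock_add_one, zero_mul, add_zero]

lemma blockSeq_isDAdd (hd : 0 < d) (hdk : d ≤ k + 1) (hc : (k + 1) * c = d * (n + 1 - k)) :
    IsDAdd n k d (blockSeq k d c β) := by
  unfold IsDAdd
  split_ifs with h
  · simp [blockSeq]
  · have hαd : blockSeq k d c β d = c := by
      rw [blockSeq, if_pos (by omega), Nat.mod_self, Nat.div_self hd, initialBlock_zero, zero_add,
        one_mul]
    refine ⟨by rw [hαd]; exact hc, fun i j hij => ?_⟩
    rw [hαd, blockSeq, blockSeq, if_pos hij, if_pos (by omega), Nat.add_mul_mod_self_right,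
      Nat.add_mul_div_right _ _ hd]
    ring

lemma blockSeq_isXseq (hd : 0 < d) (hm : k + 1 = d * (m + 1)) (hmc : (m + 1) * c = n + 1 - k)
    (hβ : Monotone β) (hβc : ∀ j, β j ≤ c) : IsXseq n k (blockSeq k d c β) := by
  refine ⟨fun i j hij hjk => ?_, ?_, fun i hi => if_neg (by omega)⟩
  · rw [blockSeq, blockSeq, if_pos (hij.trans hjk), if_pos hjk]
    rcases (Nat.div_le_div_right (c := d) hij).eq_or_lt with hq | hq
    · have hr : i % d ≤ j % d := by
        have := Nat.mod_add_div' i d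
        have := Nat.mod_add_div' j d
        rw [hq] at *
        omega
      rw [hq]
      exact Nat.add_le_add_right (initialBlock_mono hβ hr (Nat.mod_lt j hd)) _
    · calc initialBlock d β (i % d) + i / d * c ≤ c + i / d * c :=
            Nat.add_le_add_right (initialBlock_le hβc _) _
        _ = (i / d + 1) * c := by ring
        _ ≤ j / d * c := Nat.mul_le_mul_right _ hq
        _ ≤ _ := Nat.le_add_left _ _
  · have hk : k = (d - 1) + m * d := by
      have : d * (m + 1) = m * d + d := by ring
      omega
    have hkd : k % d = d - 1 ∧ k / d = m := by
      rw [hk, Nat.add_mul_mod_self_right, Nat.add_mul_div_right _ _ hd,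
        Nat.mod_eq_of_lt (by omega), Nat.div_eq_of_lt (by omega), zero_add]
      exact ⟨rfl, rfl⟩
    rw [blockSeq, if_pos le_rfl, hkd.1, hkd.2, ← hmc]
    calc initialBlock d β (d - 1) + m * c ≤ c + m * c :=
          Nat.add_le_add_right (initialBlock_le hβc _) _
      _ = (m + 1) * c := by ring

lemma IsDAdd.eq_blockSeq {α : ℕ → ℕ} (hα : IsDAdd n k d α) (hX : IsXseq n k α) (hd : 0 < d)
    (hdk : d ≤ k + 1) (hc : (k + 1) * c = d * (n + 1 - k)) :
    α = blockSeq k d c (fun j => α (j + 1)) := by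
  funext i
  rw [blockSeq]
  split_ifs with hi
  · rw [initialBlock_apply_add_one (hα.apply_zero hdk) (Nat.mod_lt i hd)]
    exact hα.apply_eq_apply_mod hc hi
  · exact hX.2.2 i (by omega)

lemma IsDAdd.apply_le {α : ℕ → ℕ} (hα : IsDAdd n k d α) (hX : IsXseq n k α)
    (hm : k + 1 = d * (m + 1)) (hmc : (m + 1) * c = n + 1 - k) {t : ℕ} (ht : t < d) :
    α t ≤ c := by
  have hk : t + m * d ≤ k := by
    have : d * (m + 1) = m * d + d := by ring
    omega
  have hc : (k + 1) * c = d * (n + 1 - k) := by rw [hm, mul_assoc, hmc]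
  have hlast : α t + m * c ≤ (m + 1) * c := by
    rw [← hα.apply_add_mul hc hk, hmc]
    exact (hX.1 _ _ hk le_rfl).trans hX.2.1
  rw [add_one_mul] at hlast
  omega

end blockSeq

def dAdditiveEquiv {n k d m c : ℕ} (hd : 0 < d) (hm : k + 1 = d * (m + 1))
    (hmc : (m + 1) * c = n + 1 - k) :
    {α : ℕ → ℕ // IsXseq n k α ∧ IsDAdd n k d α} ≃
      {β : Fin (d - 1) → ℕ // Monotone β ∧ ∀ j, β j ≤ c} :=
  have hdk : d ≤ k + 1 := hm ▸ Nat.le_mul_of_pos_right d (Nat.succ_pos m)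
  have hc : (k + 1) * c = d * (n + 1 - k) := by rw [hm, mul_assoc, hmc]
  { toFun α := ⟨fun j => α.1 (j + 1),
      fun i j hij => α.2.1.1 _ _ (Nat.succ_le_succ hij) (by have := j.isLt; omega),
      fun j => α.2.2.apply_le α.2.1 hm hmc (by have := j.isLt; omega)⟩
    invFun β := ⟨blockSeq k d c β.1, blockSeq_isXseq hd hm hmc β.2.1 β.2.2,
      blockSeq_isDAdd hd hdk hc⟩
    left_inv α := Subtype.ext (α.2.2.eq_blockSeq α.2.1 hd hdk hc).symm
    right_inv β := Subtype.ext <| funext <| blockSeq_add_one hdk }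

lemma IsDivOf.exists_period {n k d : ℕ} (hd : IsDivOf n k d) (hkn : k < n + 1) :
    ∃ m c, k + 1 = d * (m + 1) ∧ (m + 1) * c = n + 1 - k ∧ d * (n + 2) / (k + 1) = c + d := by
  obtain ⟨hd0, -, ⟨_ | m, hm⟩, hkd⟩ := hd
  · omega
  have hmd : m + 1 ∣ n + 1 - k := by
    have : m + 1 ∣ n + 2 := Nat.dvd_of_mul_dvd_mul_left hd0 (hm ▸ hkd)
    rw [show n + 2 = d * (m + 1) + (n + 1 - k) by omega] at this
    exact (Nat.dvd_add_right (Dvd.intro_left d rfl)).mp this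
  obtain ⟨c, hc⟩ := hmd
  refine ⟨m, c, hm, hc.symm, ?_⟩
  have hn : n + 2 = (m + 1) * c + d * (m + 1) := by omega
  have h : d * (n + 2) = (k + 1) * (c + d) := by rw [hn, hm]; ring
  rw [h, Nat.mul_div_cancel_left _ (Nat.succ_pos k)]

theorem stmt2_general (n k d : ℕ) (hkn : k < n + 1) (hd : IsDivOf n k d) :
    Nat.card {α : ℕ → ℕ // IsXseq n k α ∧ IsDAdd n k d α} =
      Nat.choose (d * (n + 2) / (k + 1) - 1) (d - 1) := by
  obtain ⟨m, c, hm, hmc, hq⟩ := hd.exists_period hkn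
  rw [Nat.card_congr (dAdditiveEquiv hd.1 hm hmc), card_monotone_bounded, hq]
  congr 1
  have := hd.1
  omega

/-- The number of `d`-additive sequences in `X_n^k` equals `C(d(n+2)/(k+1) - 1, d - 1)`. -/
theorem stmt2 (n k d : ℕ) (hk : 1 ≤ k) (hkn : k < n + 1) (hd : IsDivOf n k d) :
    Nat.card {α : ℕ → ℕ // IsXseq n k α ∧ IsDAdd n k d α} =
      Nat.choose (d * (n + 2) / (k + 1) - 1) (d - 1) :=
  stmt2_general n k d hkn hd
end

section
/- Let 1 ≤ v ≤ k and 1 ≤ u ≤ k be integers with u + v ≤ k+1, and let β : {1,…,k} → ℤ satisfy β(j+u) = β(j)+β(u) for 1 ≤ j ≤ k−u and β(j+v) = β(j)+β(v) for 1 ≤ j ≤ k−v. Then there exists a unique extension β : ℤ → ℤ satisfying, for all i,j ∈ ℤ, both β(j + i·v) = β(j) + i·β(v) and β(j + i·u) = β(j) + i·β(u). -/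
/-!
Writing `n = r + q * u` with `r ∈ [1, u]`, the extension is `γ n = β r + q * β u`: it is the only
function that agrees with `β` on `[1, u]` and increases by `β u` at every `u`-step, and the
`u`-relation of `β` makes it agree with `β` on all of `[1, k]`. Since `γ` commutes with `u`-steps,
its `v`-relation only has to be checked on the window `[1, u]`, where `u + v ≤ k + 1` keeps
`r + v` inside `[1, k + 1]`.
-/

theorem exists_mem_Ico_add_mul_eq {c : ℤ} (hc : 0 < c) (a n : ℤ) :
    ∃ r ∈ Set.Ico a (a + c), ∃ q : ℤ, r + q * c = n := by
  refine ⟨a + (n - a) % c, ⟨?_, ?_⟩, (n - a) / c, ?_⟩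
  · linarith [Int.emod_nonneg (n - a) hc.ne']
  · linarith [Int.emod_lt_of_pos (n - a) hc]
  · linarith [Int.emod_add_ediv_mul (n - a) c]

section ShiftExtension

variable {G : Type*} [AddCommGroup G]

theorem map_add_zsmul_of_map_add {α : Type*} [AddGroup α] {f : α → G} {c : α} {d : G}
    (h : ∀ x, f (x + c) = f x + d) (i : ℤ) (x : α) : f (x + i • c) = f x + i • d := by
  induction i using Int.induction_on generalizing x with
  | zero => simp
  | succ i ih => rw [add_one_zsmul, ← add_assoc, h, ih, add_one_zsmul, add_assoc]
  | pred i ih =>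
    have := h (x + (-(i : ℤ) - 1) • c)
    rw [add_assoc, ← add_one_zsmul, sub_add_cancel, ih] at this
    rw [eq_sub_of_add_eq this.symm, sub_one_zsmul, add_sub_assoc, sub_eq_add_neg]

theorem map_add_zsmul_of_map_add_of_le {f : ℤ → G} {a b c : ℤ} {d : G} (hc : 0 ≤ c)
    (h : ∀ j, a ≤ j → j + c ≤ b → f (j + c) = f j + d) {r : ℤ} (hr : a ≤ r) {q : ℤ}
    (hq : 0 ≤ q) (hb : r + q * c ≤ b) : f (r + q * c) = f r + q • d := by
  induction q, hq using Int.leInduction with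
  | base => simp
  | succ q hq ih =>
    have hqc : 0 ≤ q * c := mul_nonneg hq hc
    rw [add_one_mul, ← add_assoc, h _ (by linarith) (by linarith), ih (by linarith),
      add_one_zsmul, add_assoc]

theorem map_add_of_forall_mem_Ico {g : ℤ → G} {a c : ℤ} {d : G} (hc : 0 < c)
    (hg : ∀ n, g (n + c) = g n + d) {e : ℤ} {d' : G}
    (he : ∀ r ∈ Set.Ico a (a + c), g (r + e) = g r + d') (n : ℤ) : g (n + e) = g n + d' := by
  obtain ⟨r, hr, q, rfl⟩ := exists_mem_Ico_add_mul_eq hc a n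
  have hgq := map_add_zsmul_of_map_add hg q
  simp only [smul_eq_mul] at hgq
  rw [add_right_comm, hgq, he r hr, hgq, add_right_comm]

theorem eq_of_map_add_of_eqOn_Ico {g₁ g₂ : ℤ → G} {a c : ℤ} {d : G} (hc : 0 < c)
    (hg₁ : ∀ n, g₁ (n + c) = g₁ n + d) (hg₂ : ∀ n, g₂ (n + c) = g₂ n + d)
    (h : Set.EqOn g₁ g₂ (Set.Ico a (a + c))) : g₁ = g₂ := by
  funext n
  obtain ⟨r, hr, q, rfl⟩ := exists_mem_Ico_add_mul_eq hc a n
  have hg₁q := map_add_zsmul_of_map_add hg₁ q r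
  have hg₂q := map_add_zsmul_of_map_add hg₂ q r
  simp only [smul_eq_mul] at hg₁q hg₂q
  rw [hg₁q, hg₂q, h hr]

def shiftExtend (a c : ℤ) (d : G) (f : ℤ → G) (n : ℤ) : G :=
  f (a + (n - a) % c) + ((n - a) / c) • d

variable {a c : ℤ} {d : G} {f : ℤ → G}

theorem shiftExtend_add_mul (hc : c ≠ 0) (n i : ℤ) :
    shiftExtend a c d f (n + i * c) = shiftExtend a c d f n + i • d := by
  have hn : n + i * c - a = n - a + i * c := by ring
  rw [shiftExtend, shiftExtend, hn, Int.add_mul_emod_self_right, Int.add_mul_ediv_right _ _ hc,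
    add_zsmul, add_assoc]

theorem shiftExtend_add (hc : c ≠ 0) (n : ℤ) :
    shiftExtend a c d f (n + c) = shiftExtend a c d f n + d := by
  simpa using shiftExtend_add_mul (a := a) (d := d) (f := f) hc n 1

theorem shiftExtend_eq_of_le {b : ℤ} (hc : 0 < c)
    (h : ∀ j, a ≤ j → j + c ≤ b → f (j + c) = f j + d) {n : ℤ} (ha : a ≤ n) (hb : n ≤ b) :
    shiftExtend a c d f n = f n := by
  have hn : a + (n - a) % c + (n - a) / c * c = n := by
    linarith [Int.emod_add_ediv_mul (n - a) c]
  rw [shiftExtend, ← map_add_zsmul_of_map_add_of_le hc.le h, hn]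
  · linarith [Int.emod_nonneg (n - a) hc.ne']
  · exact Int.ediv_nonneg (by linarith) hc.le
  · rwa [hn]

end ShiftExtension

theorem map_add_mul_of_map_add_self {g : ℤ → ℤ} {c : ℤ} (h : ∀ x, g (x + c) = g x + g c)
    (i j : ℤ) : g (j + i * c) = g j + i * g c ∧ g (j + i * c) = g j + g (i * c) := by
  have hg := map_add_zsmul_of_map_add h i
  simp only [smul_eq_mul] at hg
  have hg0 : g 0 = 0 := by simpa using h 0
  refine ⟨hg j, ?_⟩
  rw [hg j, ← zero_add (i * c), hg 0, hg0, zero_add]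

/-- Let `1 ≤ v ≤ k`, `1 ≤ u ≤ k` with `u + v ≤ k + 1`, and let `β` (defined on `{1,…,k}`)
satisfy `β(j+u) = β(j)+β(u)` for `1 ≤ j ≤ k−u` and `β(j+v) = β(j)+β(v)` for `1 ≤ j ≤ k−v`.
Then there exists a unique extension `γ : ℤ → ℤ` satisfying, for all `i, j ∈ ℤ`, both
`γ(j + i·v) = γ(j) + i·γ(v) = γ(j) + γ(i·v)` and `γ(j + i·u) = γ(j) + i·γ(u) = γ(j) + γ(i·u)`. -/
theorem stmt4 (k u v : ℕ) (hv1 : 1 ≤ v) (hvk : v ≤ k) (hu1 : 1 ≤ u) (huk : u ≤ k)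
    (huv : u + v ≤ k + 1) (β : ℤ → ℤ)
    (hβu : ∀ j : ℤ, 1 ≤ j → j ≤ (k : ℤ) - u → β (j + u) = β j + β u)
    (hβv : ∀ j : ℤ, 1 ≤ j → j ≤ (k : ℤ) - v → β (j + v) = β j + β v) :
    ∃! γ : ℤ → ℤ,
      (∀ j : ℤ, 1 ≤ j → j ≤ (k : ℤ) → γ j = β j) ∧
      (∀ i j : ℤ, γ (j + i * v) = γ j + i * γ v ∧ γ (j + i * v) = γ j + γ (i * v)) ∧
      (∀ i j : ℤ, γ (j + i * u) = γ j + i * γ u ∧ γ (j + i * u) = γ j + γ (i * u)) := by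
  have hu : (0 : ℤ) < u := by exact_mod_cast hu1
  set γ := shiftExtend 1 u (β u) β
  have hγβ : ∀ j : ℤ, 1 ≤ j → j ≤ (k : ℤ) → γ j = β j := fun j h1 hk =>
    shiftExtend_eq_of_le hu (fun j h1 h2 => hβu j h1 (by linarith)) h1 hk
  have hγu : ∀ n, γ (n + u) = γ n + γ u := by
    rw [hγβ u (by omega) (by omega)]
    exact shiftExtend_add hu.ne'
  -- Only `r = u` can leave `[1, k]`, and then `r + v = v + u` is a `u`-step from `v`.
  have hγv : ∀ n, γ (n + v) = γ n + γ v := by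
    refine map_add_of_forall_mem_Ico (a := 1) hu hγu fun r ⟨hr1, hru⟩ => ?_
    rcases lt_or_ge (r + v) (k + 1) with hrv | hrv
    · rw [hγβ _ (by omega) (by omega), hγβ r hr1 (by omega), hγβ v (by omega) (by omega)]
      exact hβv r hr1 (by omega)
    · obtain rfl : r = u := by omega
      rw [add_comm (u : ℤ), hγu, add_comm]
  refine ⟨γ, ⟨hγβ, map_add_mul_of_map_add_self hγv, map_add_mul_of_map_add_self hγu⟩, ?_⟩
  rintro δ ⟨hδβ, -, hδu⟩
  refine eq_of_map_add_of_eqOn_Ico (a := 1) hu (fun n => ?_) hγu fun r ⟨hr1, hru⟩ => ?_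
  · simpa only [one_mul, hδβ u (by omega) (by omega), hγβ u (by omega) (by omega)] using
      (hδu 1 n).1
  · rw [hδβ r hr1 (by omega), hγβ r hr1 (by omega)]
end

section
/- Let 1 ≤ k < n+1 be integers, let d and d' be divisors of (k,n) with d' dividing d. Then every d'-additive sequence in X_n^k is also d-additive. -/
def StepAdditive (k d : ℕ) (α : ℕ → ℕ) : Prop :=
  ∀ i j : ℕ, j + i * d ≤ k → α (j + i * d) = α j + i * α d

namespace StepAdditive

variable {k d : ℕ} {α : ℕ → ℕ}

theorem apply_zero (h : StepAdditive k d α) (hd : d ≤ k) : α 0 = 0 := by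
  simpa using h 1 0 (by simpa)

theorem apply_mul (h : StepAdditive k d α) {t : ℕ} (ht : 0 < t) (htd : t * d ≤ k) :
    α (t * d) = t * α d := by
  have h0 := h.apply_zero (le_trans (Nat.le_mul_of_pos_left d ht) htd)
  simpa [h0] using h t 0 (by simpa)

theorem of_dvd {d' : ℕ} (h : StepAdditive k d' α) (hdd : d' ∣ d) (hd : 0 < d) :
    StepAdditive k d α := by
  obtain ⟨t, rfl⟩ := hdd
  intro i j hij
  rcases Nat.eq_zero_or_pos i with rfl | hi
  · simp
  have htd : t * d' ≤ k := by nlinarith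
  rw [show i * (d' * t) = i * t * d' by ring] at hij ⊢
  rw [h _ _ hij, mul_comm d' t, h.apply_mul (Nat.pos_of_mul_pos_left hd) htd]
  ring

end StepAdditive

theorem stmt6_general (n k d d' : ℕ)
    (hd : IsDivOf n k d) (hdd : d' ∣ d)
    (α : ℕ → ℕ) (h : IsDAdd n k d' α) :
    IsDAdd n k d α := by
  obtain ⟨hd_pos, hd_le, -, -⟩ := hd
  have hd'd : d' ≤ d := Nat.le_of_dvd hd_pos hdd
  unfold IsDAdd at h ⊢
  by_cases hdk : d = k + 1
  · rw [if_pos hdk]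
    by_cases hd'k : d' = k + 1
    · rwa [if_pos hd'k] at h
    · rw [if_neg hd'k] at h
      exact StepAdditive.apply_zero h.2 (by omega)
  · have hd'k : d' ≠ k + 1 := by omega
    rw [if_neg hdk]
    rw [if_neg hd'k] at h
    obtain ⟨hval, hadd : StepAdditive k d' α⟩ := h
    refine ⟨?_, hadd.of_dvd hdd hd_pos⟩
    obtain ⟨t, rfl⟩ := hdd
    have hαd : α (d' * t) = t * α d' := by
      rw [mul_comm d' t]
      exact hadd.apply_mul (Nat.pos_of_mul_pos_left hd_pos) (by rw [mul_comm]; omega)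
    rw [hαd, mul_left_comm, hval]
    ring

/-- If `d` and `d'` are divisors of `(k,n)` with `d' ∣ d`, then every `d'`-additive
sequence in `X_n^k` is also `d`-additive. -/
theorem stmt6 (n k d d' : ℕ) (hk : 1 ≤ k) (hkn : k < n + 1)
    (hd : IsDivOf n k d) (hd' : IsDivOf n k d') (hdd : d' ∣ d)
    (α : ℕ → ℕ) (hα : IsXseq n k α) (h : IsDAdd n k d' α) :
    IsDAdd n k d α :=
  stmt6_general n k d d' hd hdd α h
end

section
/- Let 1 ≤ k < n+1 be integers, let {d_i}_{i∈I} be a finite nonempty family of divisors of (k,n), and let d = gcd{d_i}. Then a sequence α ∈ X_n^k is d_i-additive for every i ∈ I if and only if α is d-additive; equivalently, the intersection over i ∈ I of the sets of d_i-additive sequences equals the set of d-additive sequences. -/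
/-!
Write `δ = n + 1 - k` and measure how far `α` is from the line of slope `δ/(k+1)` through the
origin by `D x = (k+1) α x - x δ` (`slopeDefect`). Then `α` is `d`-additive exactly when `α 0 = 0` and `d` is a
period of `D` on `{0,…,k}`, so the theorem becomes a statement about periods. On an interval of
length `L + 1`, periods `p, q` with `p + q ≤ L + 1` give the period `gcd p q` by running the
subtractive Euclidean algorithm, and any two divisors of `L + 1` satisfy this bound unless one of
them is `L + 1`, which is a vacuous period.
-/

theorem Nat.two_mul_le_of_dvd_of_ne {p m : ℕ} (hpm : p ∣ m) (hne : p ≠ m) (hm : 0 < m) :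
    2 * p ≤ m := by
  obtain ⟨c, rfl⟩ := hpm
  rcases c with _ | _ | c
  · simp at hm
  · simp at hne
  · nlinarith

def IsPeriodUpTo {β : Type*} (L : ℕ) (f : ℕ → β) (t : ℕ) : Prop :=
  ∀ x, x + t ≤ L → f (x + t) = f x

namespace IsPeriodUpTo

variable {β : Type*} {L : ℕ} {f : ℕ → β} {p q t u : ℕ}

theorem of_lt (hL : L < t) : IsPeriodUpTo L f t :=
  fun _ hx => absurd hx (by omega)

theorem of_dvd (ht : IsPeriodUpTo L f t) (htm : t ∣ u) : IsPeriodUpTo L f u := by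
  obtain ⟨c, rfl⟩ := htm
  induction c with
  | zero => intro x _; rfl
  | succ c ih =>
    intro x hx
    rw [Nat.mul_succ, ← add_assoc] at hx ⊢
    rw [ht _ hx, ih x (by omega)]

theorem of_add (hut : IsPeriodUpTo L f (u + t)) (ht : IsPeriodUpTo L f t)
    (hL : u + t + t ≤ L + 1) : IsPeriodUpTo L f u := by
  intro x hx
  by_cases hxut : x + (u + t) ≤ L
  · rw [← ht (x + u) (by omega), add_assoc, hut x hxut]
  · -- `x + u + t > L ≥ u + 2t - 1` forces `x ≥ t`, so we can step back by `t` instead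
    obtain ⟨y, rfl⟩ : ∃ y, x = y + t := ⟨x - t, by omega⟩
    rw [ht y (by omega), show y + t + u = y + (u + t) by omega, hut y (by omega)]

theorem gcd (hp : IsPeriodUpTo L f p) (hq : IsPeriodUpTo L f q) (hpq : p + q ≤ L + 1) :
    IsPeriodUpTo L f (Nat.gcd p q) := by
  induction hn : p + q using Nat.strong_induction_on generalizing p q with
  | _ n ih =>
    wlog hle : p ≤ q generalizing p q
    · rw [Nat.gcd_comm]
      exact this hq hp (by omega) (by omega) (by omega)
    rcases Nat.eq_zero_or_pos p with rfl | hp0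
    · rwa [Nat.gcd_zero_left]
    have hqp : IsPeriodUpTo L f (q - p) :=
      of_add (by rwa [Nat.sub_add_cancel hle]) hp (by omega)
    rw [← Nat.gcd_sub_self_right hle]
    exact ih q (by omega) hp hqp (by omega) (by omega)

theorem gcd_of_dvd (hp : IsPeriodUpTo L f p) (hq : IsPeriodUpTo L f q)
    (hpL : p ∣ L + 1) (hqL : q ∣ L + 1) : IsPeriodUpTo L f (Nat.gcd p q) := by
  by_cases hpe : p = L + 1
  · rwa [hpe, Nat.gcd_eq_right hqL]
  by_cases hqe : q = L + 1
  · rwa [hqe, Nat.gcd_eq_left hpL]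
  have hp2 := Nat.two_mul_le_of_dvd_of_ne hpL hpe L.succ_pos
  have hq2 := Nat.two_mul_le_of_dvd_of_ne hqL hqe L.succ_pos
  exact gcd hp hq (by omega)

theorem finset_gcd {s : Finset ℕ} (hs : s.Nonempty)
    (h : ∀ e ∈ s, e ∣ L + 1 ∧ IsPeriodUpTo L f e) : IsPeriodUpTo L f (s.gcd id) := by
  induction hs using Finset.Nonempty.cons_induction with
  | singleton a => simpa using (h a (Finset.mem_singleton_self a)).2
  | cons a s has hs ih =>
    obtain ⟨b, hb⟩ := hs
    simp only [Finset.mem_cons, forall_eq_or_imp] at h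
    rw [Finset.cons_eq_insert, Finset.gcd_insert]
    exact gcd_of_dvd h.1.2 (ih h.2) h.1.1 ((Finset.gcd_dvd hb).trans (h.2 b hb).1)

end IsPeriodUpTo

def slopeDefect (n k : ℕ) (α : ℕ → ℕ) (x : ℕ) : ℤ :=
  (k + 1 : ℤ) * α x - x * (n + 1 - k : ℕ)

theorem isDAdd_iff {n k d : ℕ} {α : ℕ → ℕ} (hd : d ≤ k + 1) :
    IsDAdd n k d α ↔ α 0 = 0 ∧ IsPeriodUpTo k (slopeDefect n k α) d := by
  unfold IsDAdd
  split_ifs with hdk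
  · exact (and_iff_left (IsPeriodUpTo.of_lt (by omega))).symm
  constructor
  · rintro ⟨hαd, hadd⟩
    have hstep (x : ℕ) (hx : x + d ≤ k) : α (x + d) = α x + α d := by
      simpa using hadd 1 x (by simpa using hx)
    refine ⟨by simpa using hstep 0 (by omega), fun x hx => ?_⟩
    have hαd' : ((k + 1 : ℕ) : ℤ) * α d = d * (n + 1 - k : ℕ) := by exact_mod_cast hαd
    simp only [slopeDefect, hstep x hx]
    push_cast at hαd' ⊢
    linear_combination hαd'
  · rintro ⟨hα0, hper⟩
    have hαd : (k + 1) * α d = d * (n + 1 - k) := by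
      have := hper 0 (by omega)
      simp only [slopeDefect, zero_add, hα0] at this
      push_cast at this
      exact_mod_cast (by linarith : ((k : ℤ) + 1) * α d = d * (n + 1 - k : ℕ))
    refine ⟨hαd, fun i j hj => ?_⟩
    have hαd' : ((k + 1 : ℕ) : ℤ) * α d = d * (n + 1 - k : ℕ) := by exact_mod_cast hαd
    have hji := hper.of_dvd (dvd_mul_left d i) j hj
    simp only [slopeDefect] at hji
    push_cast at hαd' hji
    have : ((k : ℤ) + 1) * α (j + i * d) = ((k : ℤ) + 1) * (α j + i * α d) := by
      linear_combination hji - i * hαd'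
    exact_mod_cast mul_left_cancel₀ (by positivity) this

theorem forall_isDAdd_iff_isDAdd_gcd {n k : ℕ} {s : Finset ℕ} (hs : s.Nonempty)
    (hdiv : ∀ e ∈ s, e ∣ k + 1) (α : ℕ → ℕ) :
    (∀ e ∈ s, IsDAdd n k e α) ↔ IsDAdd n k (s.gcd id) α := by
  have hle (e : ℕ) (he : e ∈ s) : e ≤ k + 1 := Nat.le_of_dvd k.succ_pos (hdiv e he)
  obtain ⟨e₀, he₀⟩ := hs
  have hgcd_le : s.gcd id ≤ k + 1 :=
    Nat.le_of_dvd k.succ_pos ((Finset.gcd_dvd he₀).trans (hdiv e₀ he₀))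
  rw [isDAdd_iff hgcd_le]
  constructor
  · intro H
    have H' (e : ℕ) (he : e ∈ s) := (isDAdd_iff (hle e he)).1 (H e he)
    exact ⟨(H' e₀ he₀).1, .finset_gcd ⟨e₀, he₀⟩ fun e he => ⟨hdiv e he, (H' e he).2⟩⟩
  · rintro ⟨hα0, hper⟩ e he
    exact (isDAdd_iff (hle e he)).2 ⟨hα0, hper.of_dvd (Finset.gcd_dvd he)⟩

theorem stmt7_general (n k : ℕ)
    (s : Finset ℕ) (hs : s.Nonempty) (h : ∀ e ∈ s, IsDivOf n k e) :
    (∀ α : ℕ → ℕ, IsXseq n k α →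
      ((∀ e ∈ s, IsDAdd n k e α) ↔ IsDAdd n k (s.gcd id) α)) ∧
    (⋂ e ∈ s, {α : ℕ → ℕ | IsXseq n k α ∧ IsDAdd n k e α}) =
      {α : ℕ → ℕ | IsXseq n k α ∧ IsDAdd n k (s.gcd id) α} := by
  have key := forall_isDAdd_iff_isDAdd_gcd (n := n) hs fun e he => (h e he).2.2.1
  refine ⟨fun α _ => key α, ?_⟩
  ext α
  simp only [Set.mem_iInter, Set.mem_ofPred_eq, ← key]
  obtain ⟨e₀, he₀⟩ := hs
  exact ⟨fun H => ⟨(H e₀ he₀).1, fun e he => (H e he).2⟩, fun H e he => ⟨H.1, H.2 e he⟩⟩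

/-- For a finite nonempty family `{dᵢ}` of divisors of `(k,n)` with gcd `d`:
`α` is `dᵢ`-additive for every `i` iff `α` is `d`-additive; equivalently the intersection
of the sets of `dᵢ`-additive sequences equals the set of `d`-additive sequences. -/
theorem stmt7 (n k : ℕ) (hk : 1 ≤ k) (hkn : k < n + 1)
    (s : Finset ℕ) (hs : s.Nonempty) (h : ∀ e ∈ s, IsDivOf n k e) :
    (∀ α : ℕ → ℕ, IsXseq n k α →
      ((∀ e ∈ s, IsDAdd n k e α) ↔ IsDAdd n k (s.gcd id) α)) ∧
    (⋂ e ∈ s, {α : ℕ → ℕ | IsXseq n k α ∧ IsDAdd n k e α}) =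
      {α : ℕ → ℕ | IsXseq n k α ∧ IsDAdd n k (s.gcd id) α} :=
  stmt7_general n k s hs h
end

section
/- Let 1 ≤ k < n+1 be integers and D = gcd(k+1, n+2). Then the set of divisors of (k,n) equals { (k+1)x/D : x is a positive divisor of D }. -/
theorem Nat.dvd_mul_right_iff_div_gcd_dvd {a b d : ℕ} (ha : 0 < a) :
    a ∣ d * b ↔ a / a.gcd b ∣ d := by
  have hg : 0 < a.gcd b := Nat.gcd_pos_of_pos_left b ha
  have hab : a / a.gcd b * a.gcd b ∣ d * (b / a.gcd b) * a.gcd b ↔ a ∣ d * b := by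
    rw [Nat.div_mul_cancel (Nat.gcd_dvd_left a b), mul_assoc,
      Nat.div_mul_cancel (Nat.gcd_dvd_right a b)]
  rw [← hab, Nat.mul_dvd_mul_iff_right hg]
  exact (Nat.coprime_div_gcd_div_gcd hg).dvd_mul_right

theorem Nat.pos_and_dvd_and_div_dvd_iff {a g d : ℕ} (ha : 0 < a) (hg : g ∣ a) :
    (0 < d ∧ d ∣ a ∧ a / g ∣ d) ↔ ∃ x, 0 < x ∧ x ∣ g ∧ d = a * x / g := by
  obtain ⟨m, rfl⟩ := hg
  have hg0 : 0 < g := Nat.pos_of_mul_pos_right ha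
  have hm0 : 0 < m := Nat.pos_of_mul_pos_left ha
  simp only [Nat.mul_div_cancel_left m hg0, mul_assoc, Nat.mul_div_cancel_left _ hg0]
  constructor
  · rintro ⟨hd0, hda, x, rfl⟩
    refine ⟨x, Nat.pos_of_mul_pos_left hd0, ?_, rfl⟩
    rwa [mul_comm g m, Nat.mul_dvd_mul_iff_left hm0] at hda
  · rintro ⟨x, hx0, hxg, rfl⟩
    exact ⟨Nat.mul_pos hm0 hx0, by rw [mul_comm g m]; exact Nat.mul_dvd_mul_left m hxg,
      dvd_mul_right m x⟩

theorem isDivOf_iff (n k d : ℕ) :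
    IsDivOf n k d ↔ 0 < d ∧ d ∣ k + 1 ∧ (k + 1) / (k + 1).gcd (n + 2) ∣ d := by
  rw [IsDivOf, Nat.dvd_mul_right_iff_div_gcd_dvd k.succ_pos]
  constructor
  · rintro ⟨hd0, -, hdk, hdiv⟩
    exact ⟨hd0, hdk, hdiv⟩
  · rintro ⟨hd0, hdk, hdiv⟩
    exact ⟨hd0, Nat.le_of_dvd k.succ_pos hdk, hdk, hdiv⟩

theorem stmt8_general (n k : ℕ) :
    {d : ℕ | IsDivOf n k d} =
      {e : ℕ | ∃ x : ℕ, 0 < x ∧ x ∣ Nat.gcd (k + 1) (n + 2) ∧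
        e = (k + 1) * x / Nat.gcd (k + 1) (n + 2)} := by
  ext d
  rw [Set.mem_ofPred_eq, Set.mem_ofPred_eq, isDivOf_iff]
  exact Nat.pos_and_dvd_and_div_dvd_iff k.succ_pos (Nat.gcd_dvd_left _ _)

/-- With `D = gcd(k+1, n+2)`, the set of divisors of `(k,n)` equals
`{ (k+1)·x/D : x a positive divisor of D }`. -/
theorem stmt8 (n k : ℕ) (hk : 1 ≤ k) (hkn : k < n + 1) :
    {d : ℕ | IsDivOf n k d} =
      {e : ℕ | ∃ x : ℕ, 0 < x ∧ x ∣ Nat.gcd (k + 1) (n + 2) ∧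
        e = (k + 1) * x / Nat.gcd (k + 1) (n + 2)} :=
  stmt8_general n k
end

section
/- Let 1 ≤ k < n+1 be integers such that k+1 and n+2 are coprime. Then the number of equivalence classes, up to rotation, of (k+1)-element subsets of the vertex set of a regular (n+2)-gon equals (1/(n+2))·C(n+2, k+1) = (1/(k+1))·C(n+1, k). -/
/-!
If a translate `g + s` of an `r`-element subset `s` of a finite abelian group equals `s`, then
comparing the sums of the elements gives `r • g = 0`; when `r` is coprime to the order of the
group this forces `g = 0`. So rotations act freely on `r`-subsets of `ℤ/m`, every orbit has
exactly `m` elements, and there are `C(m, r) / m` orbits. The second formula follows from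
`(n + 2) C(n + 1, k) = (k + 1) C(n + 2, k + 1)`.
-/

/-- The number of orbits of the rotation (translation) action of `ℤ/m` on the
set of `r`-element subsets of `ℤ/m`. -/
noncomputable def numOrbits (m r : ℕ) : ℕ :=
  Nat.card (Quot (fun s t : {s : Finset (ZMod m) // s.card = r} =>
    ∃ g : ZMod m, s.1.image (fun x => x + g) = t.1))

open scoped Pointwise

theorem Finset.eq_zero_of_vadd_finset_eq_self {G : Type*} [AddCommGroup G] [Finite G]
    [DecidableEq G] {s : Finset G} (hs : s.card.Coprime (Nat.card G)) {g : G}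
    (hg : g +ᵥ s = s) : g = 0 := by
  have hsum : ∑ x ∈ s, (g + x) = ∑ x ∈ s, x :=
    calc ∑ x ∈ s, (g + x) = ∑ x ∈ g +ᵥ s, x :=
          (Finset.sum_image (f := fun x => x) (add_right_injective g).injOn).symm
      _ = ∑ x ∈ s, x := by rw [hg]
  rw [Finset.sum_add_distrib, Finset.sum_const, add_eq_right] at hsum
  have hdvd : addOrderOf g ∣ 1 :=
    hs ▸ Nat.dvd_gcd (addOrderOf_dvd_of_nsmul_eq_zero hsum) (addOrderOf_dvd_natCard g)
  exact AddMonoid.addOrderOf_eq_one_iff.mp (Nat.dvd_one.mp hdvd)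

theorem Set.powersetCard.addAction_stabilizer_eq_bot {G : Type*} [AddCommGroup G] [Finite G]
    [DecidableEq G] {r : ℕ} (hr : r.Coprime (Nat.card G)) (s : Set.powersetCard G r) :
    AddAction.stabilizer G s = ⊥ := by
  refine (AddSubgroup.eq_bot_iff_forall _).mpr fun g hg => ?_
  refine Finset.eq_zero_of_vadd_finset_eq_self ((Set.powersetCard.card_eq s).symm ▸ hr) ?_
  rw [AddAction.mem_stabilizer_iff] at hg
  simpa using congrArg Subtype.val hg

theorem AddAction.card_orbitRel_quotient_mul_card {G X : Type*} [AddGroup G] [AddAction G X]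
    (h : ∀ x : X, AddAction.stabilizer G x = ⊥) :
    Nat.card (AddAction.orbitRel.Quotient G X) * Nat.card G = Nat.card X := by
  rw [← Nat.card_prod, Nat.card_congr (AddAction.selfEquivOrbitsQuotientProd h)]

theorem numOrbits_eq_card_orbitRel_quotient (m r : ℕ) :
    numOrbits m r =
      Nat.card (AddAction.orbitRel.Quotient (ZMod m) (Set.powersetCard (ZMod m) r)) := by
  refine Nat.card_congr (Quot.congrRight (α := Set.powersetCard (ZMod m) r) fun s t => ?_)
  rw [AddAction.orbitRel_apply, AddAction.mem_orbit_symm]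
  refine exists_congr fun g => ?_
  rw [Subtype.ext_iff]
  simp only [Set.powersetCard.coe_vadd, Finset.vadd_finset_def, vadd_eq_add, add_comm g]

theorem numOrbits_mul_eq_choose (m r : ℕ) [NeZero m] (h : r.Coprime m) :
    numOrbits m r * m = m.choose r := by
  have hfree : ∀ s : Set.powersetCard (ZMod m) r, AddAction.stabilizer (ZMod m) s = ⊥ :=
    Set.powersetCard.addAction_stabilizer_eq_bot (by rwa [Nat.card_zmod])
  have hcount := AddAction.card_orbitRel_quotient_mul_card hfree
  rwa [Set.powersetCard.card, Nat.card_zmod, ← numOrbits_eq_card_orbitRel_quotient] at hcount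

theorem stmt11_general (n k : ℕ)
    (hcop : Nat.Coprime (k + 1) (n + 2)) :
    numOrbits (n + 2) (k + 1) * (n + 2) = (n + 2).choose (k + 1) ∧
    numOrbits (n + 2) (k + 1) * (k + 1) = (n + 1).choose k := by
  have hmul : numOrbits (n + 2) (k + 1) * (n + 2) = (n + 2).choose (k + 1) :=
    numOrbits_mul_eq_choose (n + 2) (k + 1) hcop
  refine ⟨hmul, Nat.eq_of_mul_eq_mul_right (Nat.succ_pos (n + 1)) ?_⟩
  calc numOrbits (n + 2) (k + 1) * (k + 1) * (n + 2)
      = (n + 2).choose (k + 1) * (k + 1) := by rw [← hmul]; ring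
    _ = (n + 1).choose k * (n + 2) := by rw [← Nat.add_one_mul_choose_eq]; ring

/-- If `k+1` and `n+2` are coprime, the number of rotation-equivalence classes of
`(k+1)`-element subsets of the vertices of a regular `(n+2)`-gon equals
`(1/(n+2))·C(n+2, k+1) = (1/(k+1))·C(n+1, k)`. -/
theorem stmt11 (n k : ℕ) (hk : 1 ≤ k) (hkn : k < n + 1)
    (hcop : Nat.Coprime (k + 1) (n + 2)) :
    numOrbits (n + 2) (k + 1) * (n + 2) = (n + 2).choose (k + 1) ∧
    numOrbits (n + 2) (k + 1) * (k + 1) = (n + 1).choose k :=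
  stmt11_general n k hcop
end

section
/- Let S : X_n^k → X_n^k be the permutation defined by S(α) = α + 1 if α_k < n+1−k and S(α) = (0, α₀, …, α_{k−1}) if α_k = n+1−k. Then for every α ∈ X_n^k, S^{n+2}(α) = α; in particular the size of every orbit of ⟨S⟩ divides n+2. -/
/-- The permutation `S` of `X_n^k`: `S(α) = α + 1` if `α k < n+1−k`, and
`S(α) = (0, α₀, …, α_{k−1})` if `α k = n+1−k`. -/
def Sfun (n k : ℕ) (α : ℕ → ℕ) : ℕ → ℕ :=
  if α k = n + 1 - k then
    fun i => if i = 0 then 0 else if i ≤ k then α (i - 1) else 0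
  else
    fun i => if i ≤ k then α i + 1 else 0

/-!
Send `α ∈ X_n^k` to the set `{α i + i | i ≤ k}` read in `ℤ/(n+2)` (`cyclicCode n k α`).
Since `i ↦ α i + i` is strictly increasing with values in `{0, …, n+1}`, the set determines `α`.
Under this encoding `S` becomes the rotation `x ↦ x + 1`: in the wrap-around case the top entry
`α k + k = n + 1` becomes `0` and every other entry moves up one index. Hence `S^{n+2}` is the
identity.
-/

open Function

theorem Function.IsPeriodicPt.natCard_orbit_dvd {β : Type*} {f : β → β} {m : ℕ} {x : β}
    (h : IsPeriodicPt f m x) (hm : 0 < m) :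
    Nat.card {y | ∃ i, f^[i] x = y} ∣ m := by
  have horbit : {y | ∃ i, f^[i] x = y} = (f^[·] x) '' Set.Iio (minimalPeriod f x) := by
    ext y
    constructor
    · rintro ⟨i, rfl⟩
      exact ⟨i % minimalPeriod f x, Nat.mod_lt _ (h.minimalPeriod_pos hm),
        iterate_mod_minimalPeriod_eq⟩
    · rintro ⟨i, -, rfl⟩
      exact ⟨i, rfl⟩
  rw [horbit, Nat.card_image_of_injOn iterate_injOn_Iio_minimalPeriod]
  simpa using h.minimalPeriod_dvd

section

variable {n k : ℕ} {α β : ℕ → ℕ}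

lemma Sfun_of_eq (h : α k = n + 1 - k) :
    Sfun n k α = fun i => if i = 0 then 0 else if i ≤ k then α (i - 1) else 0 := by
  simp [Sfun, h]

lemma Sfun_of_ne (h : α k ≠ n + 1 - k) :
    Sfun n k α = fun i => if i ≤ k then α i + 1 else 0 := by
  simp [Sfun, h]

lemma isXseq_Sfun (hα : IsXseq n k α) : IsXseq n k (Sfun n k α) := by
  obtain ⟨hmono, hle, hzero⟩ := hα
  by_cases h : α k = n + 1 - k
  · rw [Sfun_of_eq h]
    refine ⟨fun i j hij hj => ?_, ?_, fun i hi => ?_⟩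
    · rcases Nat.eq_zero_or_pos i with rfl | hi
      · simp
      · simp only [if_neg (show i ≠ 0 by omega), if_neg (show j ≠ 0 by omega),
          if_pos (hij.trans hj), if_pos hj]
        exact hmono _ _ (by omega) (by omega)
    · dsimp only
      split_ifs
      · exact Nat.zero_le _
      · exact (hmono (k - 1) k (by omega) le_rfl).trans hle
      · exact Nat.zero_le _
    · simp [show i ≠ 0 by omega, show ¬i ≤ k by omega]
  · rw [Sfun_of_ne h]
    refine ⟨fun i j hij hj => ?_, ?_, fun i hi => ?_⟩
    · simpa [hij.trans hj, hj] using hmono i j hij hj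
    · simp only [le_refl, if_true]
      omega
    · simp [show ¬i ≤ k by omega]

lemma isXseq_iterate_Sfun (hα : IsXseq n k α) (m : ℕ) : IsXseq n k ((Sfun n k)^[m] α) := by
  induction m with
  | zero => exact hα
  | succ m ih => rw [iterate_succ_apply']; exact isXseq_Sfun ih

def cyclicCode (n k : ℕ) (α : ℕ → ℕ) : Set (ZMod (n + 2)) :=
  Set.range fun i : Fin (k + 1) => ((α i + i : ℕ) : ZMod (n + 2))

lemma cyclicCode_Sfun (hkn : k ≤ n + 1) :
    cyclicCode n k (Sfun n k α) = (· + 1) '' cyclicCode n k α := by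
  rw [cyclicCode, cyclicCode, ← Set.range_comp]
  by_cases h : α k = n + 1 - k
  · rw [← (finRotate (k + 1)).surjective.range_comp]
    congr 1
    funext j
    simp only [comp_apply, Sfun_of_eq h]
    by_cases hj : j = Fin.last k
    · have hwrap : ((α k + k : ℕ) : ZMod (n + 2)) + 1 = 0 := by
        rw [show α k + k = n + 1 by omega, ← Nat.cast_succ]
        exact ZMod.natCast_self _
      simpa [hj] using hwrap.symm
    · rw [coe_finRotate_of_ne_last hj, if_neg (Nat.succ_ne_zero _),
        if_pos (Nat.succ_le_of_lt (Fin.val_lt_last hj)), Nat.add_sub_cancel]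
      push_cast
      ring
  · congr 1
    funext i
    simp only [comp_apply, Sfun_of_ne h, if_pos (Nat.le_of_lt_succ i.isLt)]
    push_cast
    ring

lemma cyclicCode_iterate_Sfun (hkn : k ≤ n + 1) (m : ℕ) :
    cyclicCode n k ((Sfun n k)^[m] α) = (· + (m : ZMod (n + 2))) '' cyclicCode n k α := by
  induction m with
  | zero => simp
  | succ m ih =>
    rw [iterate_succ_apply', cyclicCode_Sfun hkn, ih, Set.image_image]
    push_cast
    simp only [add_assoc]

namespace IsXseq

lemma strictMono_add_index (hα : IsXseq n k α) : StrictMono fun i : Fin (k + 1) => α i + i := by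
  intro i j hij
  have := hα.1 i j hij.le (Nat.le_of_lt_succ j.isLt)
  rw [Fin.lt_def] at hij
  show α i + i < α j + j
  omega

lemma add_index_le (hkn : k ≤ n + 1) (hα : IsXseq n k α) {i : ℕ} (hi : i ≤ k) :
    α i + i ≤ n + 1 := by
  have := hα.1 i k hi le_rfl
  have := hα.2.1
  omega

lemma val_image_cyclicCode (hkn : k ≤ n + 1) (hα : IsXseq n k α) :
    ZMod.val '' cyclicCode n k α = Set.range fun i : Fin (k + 1) => α i + i := by
  rw [cyclicCode, ← Set.range_comp]
  congr 1
  funext i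
  have := hα.add_index_le hkn (Nat.le_of_lt_succ i.isLt)
  exact ZMod.val_natCast_of_lt (by omega)

lemma eq_of_cyclicCode_eq (hkn : k ≤ n + 1) (hα : IsXseq n k α) (hβ : IsXseq n k β)
    (h : cyclicCode n k α = cyclicCode n k β) : α = β := by
  have hadd := (hα.strictMono_add_index.range_inj hβ.strictMono_add_index).1
    (by rw [← hα.val_image_cyclicCode hkn, ← hβ.val_image_cyclicCode hkn, h])
  funext i
  rcases le_or_gt i k with hi | hi
  · have := congrFun hadd ⟨i, Nat.lt_succ_of_le hi⟩
    simp only at this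
    omega
  · rw [hα.2.2 i hi, hβ.2.2 i hi]

lemma isPeriodicPt_Sfun (hkn : k ≤ n + 1) (hα : IsXseq n k α) :
    IsPeriodicPt (Sfun n k) (n + 2) α :=
  eq_of_cyclicCode_eq hkn (isXseq_iterate_Sfun hα _) hα <| by
    rw [cyclicCode_iterate_Sfun hkn, ZMod.natCast_self]
    simp

end IsXseq

end

theorem stmt16_general (n k : ℕ) (hkn : k < n + 1)
    (α : ℕ → ℕ) (hα : IsXseq n k α) :
    (Sfun n k)^[n + 2] α = α ∧
    Nat.card {β : ℕ → ℕ | ∃ i : ℕ, (Sfun n k)^[i] α = β} ∣ (n + 2) := by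
  have hper := hα.isPeriodicPt_Sfun hkn.le
  exact ⟨hper, hper.natCard_orbit_dvd (Nat.succ_pos _)⟩

/-- For every `α ∈ X_n^k`, `S^{n+2}(α) = α`; in particular the size of the `⟨S⟩`-orbit
of `α` divides `n+2`. -/
theorem stmt16 (n k : ℕ) (hk : 1 ≤ k) (hkn : k < n + 1)
    (α : ℕ → ℕ) (hα : IsXseq n k α) :
    (Sfun n k)^[n + 2] α = α ∧
    Nat.card {β : ℕ → ℕ | ∃ i : ℕ, (Sfun n k)^[i] α = β} ∣ (n + 2) :=
  stmt16_general n k hkn α hα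
end

section
/- For n ≥ 1, the number of pairs ((α,β),(i,j)) of index pairs with either 0 ≤ α ≤ β < i−1 ≤ j−1 ≤ n−1 or 0 ≤ α < i ≤ j < β ≤ n equals 2·C(n+2, 4). -/
/-!
Both families are in bijection with the strictly increasing quadruples below `n + 2`, i.e. with
the `4`-subsets of `{0, …, n + 1}`: a separated pair `α ≤ β < i - 1 ≤ j - 1` goes to
`α < β + 1 < i < j + 1`, and a nested pair `α < i ≤ j < β` goes to `α < i < j + 1 < β + 1`.
The families are disjoint, since `β + 1 < i` in the first and `i < β` in the second.
-/

theorem Nat.card_fin_orderEmbedding_fin (k N : ℕ) : Nat.card (Fin k ↪o Fin N) = N.choose k := by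
  rw [Nat.card_congr Set.powersetCard.ofFinEmbEquiv, Set.powersetCard.card, Nat.card_fin]

def IsIncreasingBelow (N : ℕ) (q : (ℕ × ℕ) × (ℕ × ℕ)) : Prop :=
  q.1.1 < q.1.2 ∧ q.1.2 < q.2.1 ∧ q.2.1 < q.2.2 ∧ q.2.2 < N

def finOrderEmbeddingEquivIncreasing (N : ℕ) :
    (Fin 4 ↪o Fin N) ≃ {q : (ℕ × ℕ) × (ℕ × ℕ) // IsIncreasingBelow N q} where
  toFun f := ⟨((f 0, f 1), (f 2, f 3)),
    f.strictMono (by decide), f.strictMono (by decide), f.strictMono (by decide), (f 3).isLt⟩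
  invFun q := OrderEmbedding.ofStrictMono
    (fun i => ⟨![q.1.1.1, q.1.1.2, q.1.2.1, q.1.2.2] i, by
      obtain ⟨_, _, _, _⟩ := q.2; fin_cases i <;> simp <;> omega⟩)
    (Fin.strictMono_iff_lt_succ.2 fun i => by
      obtain ⟨_, _, _, _⟩ := q.2; fin_cases i <;> simpa [Fin.lt_def])
  left_inv f := by ext i; fin_cases i <;> rfl
  right_inv q := rfl

instance (N : ℕ) : Finite {q : (ℕ × ℕ) × (ℕ × ℕ) // IsIncreasingBelow N q} :=
  .of_equiv _ (finOrderEmbeddingEquivIncreasing N)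

theorem card_isIncreasingBelow (N : ℕ) :
    Nat.card {q : (ℕ × ℕ) × (ℕ × ℕ) // IsIncreasingBelow N q} = N.choose 4 := by
  rw [← Nat.card_congr (finOrderEmbeddingEquivIncreasing N), Nat.card_fin_orderEmbedding_fin]

def separatedEquivIncreasing (n : ℕ) :
    {q : (ℕ × ℕ) × (ℕ × ℕ) // q.1.1 ≤ q.1.2 ∧ q.1.2 + 1 < q.2.1 ∧ q.2.1 ≤ q.2.2 ∧ q.2.2 ≤ n} ≃
      {q : (ℕ × ℕ) × (ℕ × ℕ) // IsIncreasingBelow (n + 2) q} where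
  toFun := fun ⟨((a, b), (c, d)), h⟩ =>
    ⟨((a, b + 1), (c, d + 1)), by dsimp only [IsIncreasingBelow] at h ⊢; omega⟩
  invFun := fun ⟨((a, b), (c, d)), h⟩ =>
    ⟨((a, b - 1), (c, d - 1)), by dsimp only [IsIncreasingBelow] at h ⊢; omega⟩
  left_inv := fun ⟨((a, b), (c, d)), h⟩ => by simp
  right_inv := fun ⟨((a, b), (c, d)), h⟩ => by
    dsimp only [IsIncreasingBelow] at h; ext <;> simp <;> omega

def nestedEquivIncreasing (n : ℕ) :
    {q : (ℕ × ℕ) × (ℕ × ℕ) // q.1.1 < q.2.1 ∧ q.2.1 ≤ q.2.2 ∧ q.2.2 < q.1.2 ∧ q.1.2 ≤ n} ≃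
      {q : (ℕ × ℕ) × (ℕ × ℕ) // IsIncreasingBelow (n + 2) q} where
  toFun := fun ⟨((a, b), (c, d)), h⟩ =>
    ⟨((a, c), (d + 1, b + 1)), by dsimp only [IsIncreasingBelow] at h ⊢; omega⟩
  invFun := fun ⟨((a, c), (d, b)), h⟩ =>
    ⟨((a, b - 1), (c, d - 1)), by dsimp only [IsIncreasingBelow] at h ⊢; omega⟩
  left_inv := fun ⟨((a, b), (c, d)), h⟩ => by simp
  right_inv := fun ⟨((a, b), (c, d)), h⟩ => by
    dsimp only [IsIncreasingBelow] at h; ext <;> simp <;> omega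

theorem stmt18_general (n : ℕ) :
    Nat.card {q : (ℕ × ℕ) × (ℕ × ℕ) //
      (q.1.1 ≤ q.1.2 ∧ q.1.2 + 1 < q.2.1 ∧ q.2.1 ≤ q.2.2 ∧ q.2.2 ≤ n) ∨
      (q.1.1 < q.2.1 ∧ q.2.1 ≤ q.2.2 ∧ q.2.2 < q.1.2 ∧ q.1.2 ≤ n)} =
      2 * Nat.choose (n + 2) 4 := by
  have separated_disjoint_nested : Disjoint
      (fun q : (ℕ × ℕ) × (ℕ × ℕ) => q.1.1 ≤ q.1.2 ∧ q.1.2 + 1 < q.2.1 ∧ q.2.1 ≤ q.2.2 ∧ q.2.2 ≤ n)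
      (fun q => q.1.1 < q.2.1 ∧ q.2.1 ≤ q.2.2 ∧ q.2.2 < q.1.2 ∧ q.1.2 ≤ n) :=
    Pi.disjoint_iff.2 fun _ => Prop.disjoint_iff.2 (by omega)
  rw [Nat.card_congr ((subtypeOrEquiv _ _ separated_disjoint_nested).trans
      ((separatedEquivIncreasing n).sumCongr (nestedEquivIncreasing n))),
    Nat.card_sum, card_isIncreasingBelow, two_mul]

/-- For `n ≥ 1`, the number of pairs `((α,β),(i,j))` of index pairs with either
`0 ≤ α ≤ β < i−1 ≤ j−1 ≤ n−1` or `0 ≤ α < i ≤ j < β ≤ n` equals `2·C(n+2, 4)`. -/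
theorem stmt18 (n : ℕ) (hn : 1 ≤ n) :
    Nat.card {q : (ℕ × ℕ) × (ℕ × ℕ) //
      (q.1.1 ≤ q.1.2 ∧ q.1.2 + 1 < q.2.1 ∧ q.2.1 ≤ q.2.2 ∧ q.2.2 ≤ n) ∨
      (q.1.1 < q.2.1 ∧ q.2.1 ≤ q.2.2 ∧ q.2.2 < q.1.2 ∧ q.1.2 ≤ n)} =
      2 * Nat.choose (n + 2) 4 :=
  stmt18_general n
end
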